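/- arXiv:2504.06960 — 2 statements merged into one kernel-verified Lean document; each statement's English description precedes it below -/
import Mathlib

section
/- Let m, c, r, k, j be integers with 2 ≤ c ≤ r ≤ m, 0 ≤ k ≤ ⌊m/c⌋ − 1, r = ⌊m/(k+1)⌋, and 0 ≤ j ≤ k. Then C(m−c−j, r−c) / C(m, r) ≥ (∏_{i=0}^{c−1} (r−i)/(m−i)) · ((c−1)/c)^c. -/
open Finset Real

/-!
Splitting off the first `c` factors, the ratio is `∏_{i<c} (r-i)/(m-i)` times
`∏_{ℓ<r-c} (1 - x_ℓ)` with `x_ℓ = j/(m-c-ℓ)`. Since `r(k+1) ≤ m` and `j ≤ k`, every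
`x_ℓ ≤ j/(m-r+1)` is at most `1/c` and `∑ x_ℓ ≤ 1`. Bernoulli's inequality for exponents in
`[0,1]` gives `1 - x ≥ ((c-1)/c)^(c x)` for `0 ≤ x ≤ 1/c`, so the second product is at least
`((c-1)/c)^(c ∑ x_ℓ) ≥ ((c-1)/c)^c`.
-/

theorem Nat.cast_descFactorial_eq_prod_range (n k : ℕ) :
    (n.descFactorial k : ℝ) = ∏ i ∈ range k, ((n - i : ℕ) : ℝ) := by
  rw [Nat.descFactorial_eq_prod_range, Nat.cast_prod]

theorem Nat.cast_choose_div_choose {m r c : ℕ} (hcr : c ≤ r) (hrm : r ≤ m) (n : ℕ) :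
    (n.choose (r - c) : ℝ) / m.choose r
      = r.descFactorial c / m.descFactorial c
        * (n.descFactorial (r - c) / (m - c).descFactorial (r - c)) := by
  have : (m.choose r : ℝ) ≠ 0 := by have := Nat.choose_pos hrm; positivity
  have : (m.descFactorial c : ℝ) ≠ 0 := by
    have := Nat.descFactorial_pos.2 (hcr.trans hrm); positivity
  have : ((m - c).descFactorial (r - c) : ℝ) ≠ 0 := by
    have := Nat.descFactorial_pos.2 (Nat.sub_le_sub_right hrm c); positivity
  rw [Nat.descFactorial_eq_factorial_mul_choose n]
  field_simp
  norm_cast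
  rw [mul_assoc, mul_comm (m.descFactorial c), Nat.descFactorial_mul_descFactorial hcr,
    Nat.descFactorial_eq_factorial_mul_choose m, ← Nat.factorial_mul_descFactorial hcr]
  ring

theorem sub_one_div_rpow_mul_le_one_sub {c x : ℝ} (hc : 1 < c) (hx : 0 ≤ x) (hcx : c * x ≤ 1) :
    ((c - 1) / c) ^ (c * x) ≤ 1 - x := by
  have hc0 : 0 < c := by linarith
  have := rpow_one_add_le_one_add_mul_self (s := -1 / c) (by rw [le_div_iff₀ hc0]; linarith)
    (by positivity) hcx
  convert this using 2
  · field_simp; ring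
  · field_simp; ring

theorem sub_one_div_rpow_le_prod_one_sub {ι : Type*} (s : Finset ι) {x : ι → ℝ} {c : ℝ}
    (hc : 1 < c) (hx : ∀ i ∈ s, 0 ≤ x i) (hcx : ∀ i ∈ s, c * x i ≤ 1)
    (hsum : ∑ i ∈ s, x i ≤ 1) :
    ((c - 1) / c) ^ c ≤ ∏ i ∈ s, (1 - x i) := by
  have hc0 : 0 < c := by linarith
  have hb0 : 0 < (c - 1) / c := div_pos (by linarith) hc0
  have hb1 : (c - 1) / c ≤ 1 := by rw [div_le_one hc0]; linarith
  calc ((c - 1) / c) ^ c ≤ ((c - 1) / c) ^ (c * ∑ i ∈ s, x i) :=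
        rpow_le_rpow_of_exponent_ge hb0 hb1 (mul_le_of_le_one_right hc0.le hsum)
    _ = ∏ i ∈ s, ((c - 1) / c) ^ (c * x i) := by rw [mul_sum, rpow_sum_of_pos hb0]
    _ ≤ ∏ i ∈ s, (1 - x i) :=
        prod_le_prod (fun _ _ => by positivity)
          fun i hi => sub_one_div_rpow_mul_le_one_sub hc (hx i hi) (hcx i hi)

theorem sub_one_div_rpow_le_descFactorial_sub_div {c : ℝ} (hc : 1 < c) {n d j : ℕ}
    (hdn : d ≤ n) (hcj : c * j + d ≤ n + 1) (hdj : d * j + d ≤ n + 1) :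
    ((c - 1) / c) ^ c ≤ ((n - j).descFactorial d : ℝ) / n.descFactorial d := by
  have hj : (j : ℝ) ≤ c * j := le_mul_of_one_le_left (Nat.cast_nonneg j) hc.le
  have hD : (0 : ℝ) < n + 1 - d := by
    have : (d : ℝ) ≤ n := by exact_mod_cast hdn
    linarith
  have hden : ∀ l ∈ range d, (n + 1 - d : ℝ) ≤ ((n - l : ℕ) : ℝ) := by
    intro l hl
    have : l + 1 ≤ d := mem_range.1 hl
    rw [Nat.cast_sub (by omega)]
    have : (l : ℝ) + 1 ≤ d := by exact_mod_cast this
    linarith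
  have hfactor : ∀ l ∈ range d,
      ((n - j - l : ℕ) : ℝ) / ((n - l : ℕ) : ℝ) = 1 - j / ((n - l : ℕ) : ℝ) := by
    intro l hl
    have hjl : j ≤ n - l := by
      have := hden l hl
      exact_mod_cast (show (j : ℝ) ≤ ((n - l : ℕ) : ℝ) by linarith)
    rw [Nat.sub_right_comm, Nat.cast_sub hjl, sub_div, div_self (by linarith [hden l hl])]
  rw [Nat.cast_descFactorial_eq_prod_range, Nat.cast_descFactorial_eq_prod_range,
    ← prod_div_distrib, prod_congr rfl hfactor]
  refine sub_one_div_rpow_le_prod_one_sub _ hc (fun _ _ => by positivity) (fun l hl => ?_) ?_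
  · rw [mul_div_assoc', div_le_one (by linarith [hden l hl])]
    linarith [hden l hl]
  · calc ∑ l ∈ range d, (j : ℝ) / ((n - l : ℕ) : ℝ) ≤ ∑ _l ∈ range d, (j : ℝ) / (n + 1 - d) :=
          sum_le_sum fun l hl => div_le_div_of_nonneg_left (Nat.cast_nonneg j) hD (hden l hl)
      _ ≤ 1 := by
          rw [sum_const, card_range, nsmul_eq_mul, mul_div_assoc', div_le_one hD]
          have : (d : ℝ) * j + d ≤ n + 1 := by exact_mod_cast hdj
          linarith

theorem choose_ratio_lower_bound_general (m c r k j : ℕ) (hc : 2 ≤ c) (hcr : c ≤ r)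
    (hr : r = m / (k + 1)) (hj : j ≤ k) :
    (((m - c - j).choose (r - c) : ℝ)) / (m.choose r : ℝ)
      ≥ (∏ i ∈ Finset.range c, ((r - i : ℕ) : ℝ) / ((m - i : ℕ) : ℝ))
          * (((c : ℝ) - 1) / c) ^ c := by
  have hrkm : r * k + r ≤ m := by
    rw [← mul_add_one, hr]
    exact Nat.div_mul_le_self m (k + 1)
  have hcj : c * j ≤ r * k := Nat.mul_le_mul hcr hj
  have hdj : (r - c) * j ≤ r * k := Nat.mul_le_mul (Nat.sub_le r c) hj
  have hc' : (1 : ℝ) < c := by exact_mod_cast hc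
  rw [prod_div_distrib, ← Nat.cast_descFactorial_eq_prod_range,
    ← Nat.cast_descFactorial_eq_prod_range, Nat.cast_choose_div_choose hcr (by omega), ge_iff_le,
    ← rpow_natCast]
  gcongr
  refine sub_one_div_rpow_le_descFactorial_sub_div hc' (by omega) ?_ (by omega)
  exact_mod_cast (show c * j + (r - c) ≤ m - c + 1 by omega)

/-- lower bound on the ratio of binomial coefficients appearing in
the Clarkson–Shor sampling argument. -/
theorem choose_ratio_lower_bound (m c r k j : ℕ) (hc : 2 ≤ c) (hcr : c ≤ r) (hrm : r ≤ m)
    (hk : k ≤ m / c - 1) (hr : r = m / (k + 1)) (hj : j ≤ k) :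
    (((m - c - j).choose (r - c) : ℝ)) / (m.choose r : ℝ)
      ≥ (∏ i ∈ Finset.range c, ((r - i : ℕ) : ℝ) / ((m - i : ℕ) : ℝ))
          * (((c : ℝ) - 1) / c) ^ c :=
  choose_ratio_lower_bound_general m c r k j hc hcr hr hj
end

section
/- Let T: ℕ → ℝ be a convex nondecreasing function with T(0)=0, let n_1, …, n_m be nonnegative integers summing to n, and let r ≤ m. Then ∑_{R ⊆ {1,…,m}, |R|=r} T(∑_{i∈R} n_i) ≤ C(m, r) · (1/m) · ∑_{i=1}^{m} T(r·n_i). -/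
/-!
Jensen's inequality for the uniform average of the `r` numbers `r * n_i`, `i ∈ R`, bounds
`T (∑ i ∈ R, n_i)` by `r⁻¹ * ∑ i ∈ R, T (r * n_i)`. Summing over the `r`-subsets `R`, each index
lies in `C(m - 1, r - 1) = C(m, r) * r / m` of them.
-/

open Finset

section Jensen

variable {𝕜 E β ι : Type*} [Field 𝕜] [LinearOrder 𝕜] [IsStrictOrderedRing 𝕜] [AddCommGroup E]
  [AddCommGroup β] [PartialOrder β] [IsOrderedAddMonoid β] [Module 𝕜 E] [Module 𝕜 β]
  [IsStrictOrderedModule 𝕜 β] {s : Set E} {f : E → β} {t : Finset ι} {p : ι → E}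

theorem ConvexOn.map_sum_le_inv_card_smul_sum (hf : ConvexOn 𝕜 s f) (ht : t.Nonempty)
    (hmem : ∀ i ∈ t, (#t : 𝕜) • p i ∈ s) :
    f (∑ i ∈ t, p i) ≤ (#t : 𝕜)⁻¹ • ∑ i ∈ t, f ((#t : 𝕜) • p i) := by
  have hcard : (#t : 𝕜) ≠ 0 := by exact_mod_cast ht.card_pos.ne'
  have hweights : ∑ _i ∈ t, (#t : 𝕜)⁻¹ = 1 := by
    rw [sum_const, nsmul_eq_mul, mul_inv_cancel₀ hcard]
  simpa [smul_sum, inv_smul_smul₀ hcard] using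
    hf.map_sum_le (fun _ _ => inv_nonneg.2 (Nat.cast_nonneg _)) hweights hmem

end Jensen

namespace Finset

variable {α : Type*} [DecidableEq α]

theorem card_filter_mem_powersetCard {s : Finset α} {i : α} (hi : i ∈ s) {r : ℕ} (hr : 0 < r) :
    #{R ∈ s.powersetCard r | i ∈ R} = (#s - 1).choose (r - 1) := by
  simpa [singleton_subset_iff] using
    card_filter_powersetCard_subset {i} s r (singleton_subset_iff.2 hi) (by rwa [card_singleton])

theorem sum_powersetCard_sum_eq_choose_smul {M : Type*} [AddCommMonoid M] (s : Finset α)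
    {r : ℕ} (hr : 0 < r) (f : α → M) :
    ∑ R ∈ s.powersetCard r, ∑ i ∈ R, f i = (#s - 1).choose (r - 1) • ∑ i ∈ s, f i := by
  rw [sum_comm' (s' := fun i => {R ∈ s.powersetCard r | i ∈ R}) (t' := s), smul_sum]
  · refine sum_congr rfl fun i hi => ?_
    rw [sum_const, card_filter_mem_powersetCard hi hr]
  · intro R i
    simp only [mem_powersetCard, mem_filter]
    exact ⟨fun ⟨hR, hiR⟩ => ⟨⟨hR, hiR⟩, hR.1 hiR⟩, fun ⟨hR, _⟩ => hR⟩

-- Where `s = ∅` or `r = 0` both sides vanish, the right one through `x / 0 = 0` or the factor `r`.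
theorem sum_powersetCard_sum_eq_mul_sum {K : Type*} [Field K] [CharZero K] (s : Finset α)
    (r : ℕ) (f : α → K) :
    ∑ R ∈ s.powersetCard r, ∑ i ∈ R, f i = ((#s).choose r * r / #s : K) * ∑ i ∈ s, f i := by
  rcases Nat.eq_zero_or_pos r with rfl | hr
  · simp
  rcases s.eq_empty_or_nonempty with rfl | hs
  · rw [powersetCard_eq_empty.2 (by simpa using hr)]; simp
  obtain ⟨n, hn⟩ := Nat.exists_eq_add_one_of_ne_zero hs.card_pos.ne'
  obtain ⟨k, rfl⟩ := Nat.exists_eq_add_one_of_ne_zero hr.ne'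
  rw [sum_powersetCard_sum_eq_choose_smul s hr, nsmul_eq_mul, hn]
  have hchoose : ((n + 1 : ℕ) : K) * n.choose k = (n + 1).choose (k + 1) * (k + 1 : ℕ) := by
    exact_mod_cast Nat.add_one_mul_choose_eq n k
  rw [Nat.add_sub_cancel, Nat.add_sub_cancel, ← hchoose]
  field_simp

end Finset

theorem sum_convex_subset_sums_le_general (T : ℝ → ℝ)
    (hconv : ConvexOn ℝ (Set.Ici (0 : ℝ)) T)
    (hT0 : T 0 = 0)
    (m r : ℕ) (nn : ℕ → ℕ) :
    ∑ R ∈ (Finset.range m).powersetCard r, T (∑ i ∈ R, (nn i : ℝ))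
      ≤ (m.choose r : ℝ) * (1 / m) * ∑ i ∈ Finset.range m, T (r * nn i) := by
  rcases Nat.eq_zero_or_pos r with rfl | hr
  · simp [hT0]
  have hr' : (r : ℝ) ≠ 0 := by exact_mod_cast hr.ne'
  have jensen : ∀ R ∈ (range m).powersetCard r,
      T (∑ i ∈ R, (nn i : ℝ)) ≤ (r : ℝ)⁻¹ * ∑ i ∈ R, T (r * nn i) := by
    intro R hR
    obtain ⟨-, hRr⟩ := mem_powersetCard.1 hR
    subst hRr
    exact hconv.map_sum_le_inv_card_smul_sum (card_pos.1 hr) fun i _ => by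
      simp only [smul_eq_mul, Set.mem_Ici]; positivity
  calc ∑ R ∈ (range m).powersetCard r, T (∑ i ∈ R, (nn i : ℝ))
      ≤ ∑ R ∈ (range m).powersetCard r, (r : ℝ)⁻¹ * ∑ i ∈ R, T (r * nn i) := sum_le_sum jensen
    _ = (r : ℝ)⁻¹ * ((m.choose r * r / m : ℝ) * ∑ i ∈ range m, T (r * nn i)) := by
      rw [← mul_sum, sum_powersetCard_sum_eq_mul_sum, card_range]
    _ = (m.choose r : ℝ) * (1 / m) * ∑ i ∈ range m, T (r * nn i) := by
      field_simp

/-- for a convex nondecreasing `T` with `T(0)=0` and nonnegative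
integers `n_1,…,n_m` summing to `n`, and `r ≤ m`,
`∑_{|R|=r} T(∑_{i∈R} n_i) ≤ C(m,r)·(1/m)·∑_i T(r·n_i)`. -/
theorem sum_convex_subset_sums_le (T : ℝ → ℝ)
    (hconv : ConvexOn ℝ (Set.Ici (0 : ℝ)) T)
    (hmono : MonotoneOn T (Set.Ici (0 : ℝ))) (hT0 : T 0 = 0)
    (m r n : ℕ) (hrm : r ≤ m) (nn : ℕ → ℕ)
    (hn : ∑ i ∈ Finset.range m, nn i = n) :
    ∑ R ∈ (Finset.range m).powersetCard r, T (∑ i ∈ R, (nn i : ℝ))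
      ≤ (m.choose r : ℝ) * (1 / m) * ∑ i ∈ Finset.range m, T (r * nn i) :=
  sum_convex_subset_sums_le_general T hconv hT0 m r nn
end
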